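/- arXiv:2403.01266 — 3 statements merged into one kernel-verified Lean document; each statement's English description precedes it below -/
import Mathlib

section
/- In the Baer–Nunziato system, a state with spatially uniform velocities v₁ = v₂ = v (constant vector) and uniform pressures p₁ = p₂ = p (with P_I = p₂, V_I = v₁) and arbitrary smooth profiles ρ₁(x), ρ₂(x), φ₁(x), evolves so that the velocities and pressures remain uniform: the exact solution is pure advection of ρ₁, ρ₂, φ₁ with speed v, with p and v unchanged. (One-dimensional version.) -/
/-! Every field of the state is a function of `x - v t`, so on it `∂ₜ = -v ∂ₓ`. Each balance law
then reduces to `(∂ₜ + v ∂ₓ)` of an advected quantity, which vanishes, plus the pressure work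
`p ∂ₓ αⱼ` (resp. `p (∂ₜ + v ∂ₓ) αⱼ`), which is cancelled exactly by the non-conservative
interfacial term because `P_I = p` and `V_I = v`. Since `p` is uniform, the stiffened-gas internal
energy `ρⱼeⱼ = (p + γⱼπⱼ)/(γⱼ - 1)` is just a constant `e`. -/

section Advection

variable {f : ℝ → ℝ} {d : ℝ} {x v t : ℝ}

theorem HasDerivAt.deriv_advect_time (hf : HasDerivAt f d (x - v * t)) :
    _root_.deriv (fun s => f (x - v * s)) t = -v * d := by
  have hshift : HasDerivAt (fun s : ℝ => x - v * s) (-v) t := by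
    simpa using ((hasDerivAt_id t).const_mul v).const_sub x
  simpa [Function.comp_def, mul_comm] using (hf.comp t hshift).deriv

theorem HasDerivAt.deriv_advect_space (hf : HasDerivAt f d (x - v * t)) :
    _root_.deriv (fun y => f (y - v * t)) x = d := by
  simpa [Function.comp_def] using (hf.comp x ((hasDerivAt_id x).sub_const (v * t))).deriv

end Advection

section PhaseBalance

variable {α ρ : ℝ → ℝ} (hα : Differentiable ℝ α) (hρ : Differentiable ℝ ρ) (v p : ℝ)
include hα

theorem advect_transport (t x : ℝ) :
    deriv (fun s => α (x - v * s)) t + v * deriv (fun y => α (y - v * t)) x = 0 := by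
  have h := (hα (x - v * t)).hasDerivAt
  rw [h.deriv_advect_time, h.deriv_advect_space]
  ring

include hρ

theorem advect_mass_balance (t x : ℝ) :
    deriv (fun s => α (x - v * s) * ρ (x - v * s)) t
      + deriv (fun y => α (y - v * t) * ρ (y - v * t) * v) x = 0 := by
  have h : HasDerivAt (fun z => α z * ρ z) _ (x - v * t) :=
    (hα (x - v * t)).hasDerivAt.mul (hρ (x - v * t)).hasDerivAt
  rw [h.deriv_advect_time, (h.mul_const v).deriv_advect_space]
  ring

theorem advect_momentum_balance (t x : ℝ) :
    deriv (fun s => α (x - v * s) * ρ (x - v * s) * v) t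
      + deriv (fun y => α (y - v * t) * (ρ (y - v * t) * v ^ 2 + p)) x
      - p * deriv (fun y => α (y - v * t)) x = 0 := by
  have hα' := (hα (x - v * t)).hasDerivAt
  have hρ' := (hρ (x - v * t)).hasDerivAt
  have hmass : HasDerivAt (fun z => α z * ρ z * v) _ (x - v * t) := (hα'.mul hρ').mul_const v
  have hflux : HasDerivAt (fun z => α z * (ρ z * v ^ 2 + p)) _ (x - v * t) :=
    hα'.mul ((hρ'.mul_const (v ^ 2)).add_const p)
  rw [hmass.deriv_advect_time, hflux.deriv_advect_space, hα'.deriv_advect_space]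
  ring

theorem advect_energy_balance (e : ℝ) (t x : ℝ) :
    deriv (fun s => α (x - v * s) * (e + ρ (x - v * s) * v ^ 2 / 2)) t
      + deriv (fun y => α (y - v * t) * v * (e + ρ (y - v * t) * v ^ 2 / 2 + p)) x
      + p * deriv (fun s => α (x - v * s)) t = 0 := by
  have hα' := (hα (x - v * t)).hasDerivAt
  have hE := (((hρ (x - v * t)).hasDerivAt.mul_const (v ^ 2)).div_const 2).const_add e
  have hdensity : HasDerivAt (fun z => α z * (e + ρ z * v ^ 2 / 2)) _ (x - v * t) :=
    hα'.mul hE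
  have hflux : HasDerivAt (fun z => α z * v * (e + ρ z * v ^ 2 / 2 + p)) _ (x - v * t) :=
    (hα'.mul_const v).mul (hE.add_const p)
  rw [hdensity.deriv_advect_time, hflux.deriv_advect_space, hα'.deriv_advect_time]
  ring

end PhaseBalance

theorem stmt9_general (ρ1 ρ2 φ : ℝ → ℝ)
    (hρ1 : Differentiable ℝ ρ1) (hρ2 : Differentiable ℝ ρ2) (hφ : Differentiable ℝ φ)
    (v p γ1 γ2 π1 π2 : ℝ) :
    -- solid mass
    (∀ t x : ℝ, deriv (fun s => φ (x - v * s) * ρ1 (x - v * s)) t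
        + deriv (fun y => φ (y - v * t) * ρ1 (y - v * t) * v) x = 0) ∧
    -- solid momentum, with interfacial pressure P_I = p
    (∀ t x : ℝ, deriv (fun s => φ (x - v * s) * ρ1 (x - v * s) * v) t
        + deriv (fun y => φ (y - v * t) * (ρ1 (y - v * t) * v ^ 2 + p)) x
        - p * deriv (fun y => φ (y - v * t)) x = 0) ∧
    -- solid energy, ρ₁E₁ = (p + γ₁π₁)/(γ₁−1) + ρ₁v²/2
    (∀ t x : ℝ, deriv (fun s => φ (x - v * s) *
          ((p + γ1 * π1) / (γ1 - 1) + ρ1 (x - v * s) * v ^ 2 / 2)) t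
        + deriv (fun y => φ (y - v * t) * v *
          ((p + γ1 * π1) / (γ1 - 1) + ρ1 (y - v * t) * v ^ 2 / 2 + p)) x
        + p * deriv (fun s => φ (x - v * s)) t = 0) ∧
    -- gas mass, φ₂ = 1 − φ₁
    (∀ t x : ℝ, deriv (fun s => (1 - φ (x - v * s)) * ρ2 (x - v * s)) t
        + deriv (fun y => (1 - φ (y - v * t)) * ρ2 (y - v * t) * v) x = 0) ∧
    -- gas momentum
    (∀ t x : ℝ, deriv (fun s => (1 - φ (x - v * s)) * ρ2 (x - v * s) * v) t
        + deriv (fun y => (1 - φ (y - v * t)) * (ρ2 (y - v * t) * v ^ 2 + p)) x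
        - p * deriv (fun y => (1 - φ (y - v * t))) x = 0) ∧
    -- gas energy
    (∀ t x : ℝ, deriv (fun s => (1 - φ (x - v * s)) *
          ((p + γ2 * π2) / (γ2 - 1) + ρ2 (x - v * s) * v ^ 2 / 2)) t
        + deriv (fun y => (1 - φ (y - v * t)) * v *
          ((p + γ2 * π2) / (γ2 - 1) + ρ2 (y - v * t) * v ^ 2 / 2 + p)) x
        + p * deriv (fun s => (1 - φ (x - v * s))) t = 0) ∧
    -- compaction equation with V_I = v
    (∀ t x : ℝ, deriv (fun s => φ (x - v * s)) t + v * deriv (fun y => φ (y - v * t)) x = 0) := by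
  have hφc : Differentiable ℝ (fun z => 1 - φ z) := hφ.const_sub 1
  exact ⟨advect_mass_balance hφ hρ1 v, advect_momentum_balance hφ hρ1 v p,
    advect_energy_balance hφ hρ1 v p _, advect_mass_balance hφc hρ2 v,
    advect_momentum_balance hφc hρ2 v p, advect_energy_balance hφc hρ2 v p _,
    advect_transport hφ v⟩

/-- Abgrall property for the 1D Baer–Nunziato system: a state with uniform
velocities `u₁ = u₂ = v` and uniform pressures `p₁ = p₂ = p` (with `P_I = p₂`, `V_I = v₁`),
stiffened-gas EOS `ρⱼeⱼ = (p + γⱼπⱼ)/(γⱼ − 1)`, `φ₂ = 1 − φ₁`, and arbitrary smooth profiles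
`ρ₁, ρ₂, φ₁` evolves by pure advection with speed `v`: the advected profiles with constant
`v, p` satisfy all seven Baer–Nunziato equations. -/
theorem stmt9 (ρ1 ρ2 φ : ℝ → ℝ)
    (hρ1 : Differentiable ℝ ρ1) (hρ2 : Differentiable ℝ ρ2) (hφ : Differentiable ℝ φ)
    (v p γ1 γ2 π1 π2 : ℝ) (hγ1 : 1 < γ1) (hγ2 : 1 < γ2) :
    -- solid mass
    (∀ t x : ℝ, deriv (fun s => φ (x - v * s) * ρ1 (x - v * s)) t
        + deriv (fun y => φ (y - v * t) * ρ1 (y - v * t) * v) x = 0) ∧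
    -- solid momentum, with interfacial pressure P_I = p
    (∀ t x : ℝ, deriv (fun s => φ (x - v * s) * ρ1 (x - v * s) * v) t
        + deriv (fun y => φ (y - v * t) * (ρ1 (y - v * t) * v ^ 2 + p)) x
        - p * deriv (fun y => φ (y - v * t)) x = 0) ∧
    -- solid energy, ρ₁E₁ = (p + γ₁π₁)/(γ₁−1) + ρ₁v²/2
    (∀ t x : ℝ, deriv (fun s => φ (x - v * s) *
          ((p + γ1 * π1) / (γ1 - 1) + ρ1 (x - v * s) * v ^ 2 / 2)) t
        + deriv (fun y => φ (y - v * t) * v *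
          ((p + γ1 * π1) / (γ1 - 1) + ρ1 (y - v * t) * v ^ 2 / 2 + p)) x
        + p * deriv (fun s => φ (x - v * s)) t = 0) ∧
    -- gas mass, φ₂ = 1 − φ₁
    (∀ t x : ℝ, deriv (fun s => (1 - φ (x - v * s)) * ρ2 (x - v * s)) t
        + deriv (fun y => (1 - φ (y - v * t)) * ρ2 (y - v * t) * v) x = 0) ∧
    -- gas momentum
    (∀ t x : ℝ, deriv (fun s => (1 - φ (x - v * s)) * ρ2 (x - v * s) * v) t
        + deriv (fun y => (1 - φ (y - v * t)) * (ρ2 (y - v * t) * v ^ 2 + p)) x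
        - p * deriv (fun y => (1 - φ (y - v * t))) x = 0) ∧
    -- gas energy
    (∀ t x : ℝ, deriv (fun s => (1 - φ (x - v * s)) *
          ((p + γ2 * π2) / (γ2 - 1) + ρ2 (x - v * s) * v ^ 2 / 2)) t
        + deriv (fun y => (1 - φ (y - v * t)) * v *
          ((p + γ2 * π2) / (γ2 - 1) + ρ2 (y - v * t) * v ^ 2 / 2 + p)) x
        + p * deriv (fun s => (1 - φ (x - v * s))) t = 0) ∧
    -- compaction equation with V_I = v
    (∀ t x : ℝ, deriv (fun s => φ (x - v * s)) t + v * deriv (fun y => φ (y - v * t)) x = 0) :=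
  stmt9_general ρ1 ρ2 φ hρ1 hρ2 hφ v p γ1 γ2 π1 π2
end

section
/- Suppose component k of a hyperbolic system with non-conservative products is conservative, i.e. the k-th row of the matrix C(U) is identically zero. Then in the semi-discrete AFD-WENO update (eqn. 15), the evolution of the k-th component of U_i is given exactly by a flux difference: d(U_i)_k/dt = −(1/Δx)[(F̂_{i+1/2})_k − (F̂_{i−1/2})_k] where F̂_{i+1/2} := F*(Û⁻,Û⁺)_{i+1/2} plus the higher-order flux-derivative corrections at interface i+1/2, and consequently Σᵢ d(U_i)_k/dt telescopes to zero on a periodic mesh. -/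
/-- If row `k` of the non-conservative matrix `C(U)` vanishes identically,
then in the AFD-WENO update of eqn. (15) the `k`-th component evolves by an exact flux
difference `−(1/Δx)[(F̂_{i+1/2})_k − (F̂_{i−1/2})_k]` with
`F̂_{i+1/2} = F(Û⁻) + D*⁻ + (higher-order corrections)`, and hence
`Σᵢ d(U_i)_k/dt = 0` on a periodic mesh. -/
theorem stmt14 (n N : ℕ) [NeZero N] (k : Fin n)
    (F : (Fin n → ℝ) → (Fin n → ℝ))
    (C : (Fin n → ℝ) → Matrix (Fin n) (Fin n) ℝ)
    (hC : ∀ V j, C V k j = 0)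
    (U Um Up Dm Dp W Gc dU : ZMod N → (Fin n → ℝ)) (Δx : ℝ)
    (hcons : ∀ i, Dm i + Dp i = F (Up i) - F (Um i))
    (hscheme : ∀ i, dU i = -(1 / Δx) • (Dm i + Dp (i - 1))
        - (1 / Δx) • (F (Um i) - F (Up (i - 1)))
        - (1 / Δx) • (C (U i)).mulVec (Um i - Up (i - 1))
        - (C (U i)).mulVec (W i)
        - (1 / Δx) • (Gc i - Gc (i - 1))) :
    (∀ i, dU i k = -(1 / Δx) * ((F (Um i) k + Dm i k + Gc i k)
        - (F (Um (i - 1)) k + Dm (i - 1) k + Gc (i - 1) k))) ∧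
    (∑ i : ZMod N, dU i k) = 0 := by
  have hmv : ∀ V (x : Fin n → ℝ), (C V).mulVec x k = 0 := by
    intro V x
    simp [Matrix.mulVec, dotProduct, hC]
  have hmain : ∀ i, dU i k = -(1 / Δx) * ((F (Um i) k + Dm i k + Gc i k)
      - (F (Um (i - 1)) k + Dm (i - 1) k + Gc (i - 1) k)) := by
    intro i
    have h1 := congrFun (hscheme i) k
    have h2 := congrFun (hcons (i - 1)) k
    simp only [Pi.add_apply, Pi.sub_apply, Pi.smul_apply, Pi.neg_apply, smul_eq_mul,
      hmv] at h1 h2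
    have hDp : Dp (i - 1) k = F (Up (i - 1)) k - F (Um (i - 1)) k - Dm (i - 1) k := by
      linarith
    rw [h1, hDp]; ring
  refine ⟨hmain, ?_⟩
  have key : ∑ i : ZMod N, (F (Um i) k + Dm i k + Gc i k) =
      ∑ i : ZMod N, (F (Um (i - 1)) k + Dm (i - 1) k + Gc (i - 1) k) :=
    (Fintype.sum_equiv (Equiv.subRight (1 : ZMod N)) _ _ (fun i => rfl)).symm
  calc ∑ i : ZMod N, dU i k
      = ∑ i : ZMod N, -(1 / Δx) * ((F (Um i) k + Dm i k + Gc i k)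
          - (F (Um (i - 1)) k + Dm (i - 1) k + Gc (i - 1) k)) :=
        Finset.sum_congr rfl (fun i _ => hmain i)
    _ = -(1 / Δx) * ((∑ i : ZMod N, (F (Um i) k + Dm i k + Gc i k))
          - ∑ i : ZMod N, (F (Um (i - 1)) k + Dm (i - 1) k + Gc (i - 1) k)) := by
        rw [← Finset.mul_sum, Finset.sum_sub_distrib]
    _ = 0 := by rw [key]; ring
end

section
/- For smooth U : ℝ → ℝⁿ, the difference of interface values satisfies (U(x_i + Δx/2) − U(x_i − Δx/2))/Δx − [ (Δx²/24)(U''(x_{i+1/2}) − U''(x_{i−1/2}))/Δx − (7Δx⁴/5760)(U⁽⁴⁾(x_{i+1/2}) − U⁽⁴⁾(x_{i−1/2}))/Δx ] = U'(x_i) + O(Δx⁶); hence the term −(1/Δx)C(U_i)(Û⁻_{i+1/2} − Û⁺_{i−1/2}) together with the C-weighted boundary-derivative corrections in eqn. (15) approximates −C(U(x_i))∂_x U(x_i) to fifth order. -/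
/-!
Expand `U`, `U''` and `U⁽⁴⁾` by Taylor's theorem about `x` to orders 7, 5 and 3. In a central
difference `f (x + h/2) - f (x - h/2)` the even-order terms cancel, leaving
`h D₁ + h³/24 D₃ + h⁵/1920 D₅ + O(h⁷)`, `h D₃ + h³/24 D₅ + O(h⁵)` and `h D₅ + O(h³)`
(`Dₖ = U⁽ᵏ⁾(x)`). The correction `−h²/24` removes `D₃`, and `1/1920 − 1/576 + 7/5760 = 0` removes
`D₅`, so the combination is `h D₁ + O(h⁷)`; dividing by `h` gives the `O(h⁶)` bound, and a
fixed matrix preserves it.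
-/

open Filter Asymptotics Topology

section
variable {𝕜 E : Type*} [NontriviallyNormedField 𝕜] [NormedAddCommGroup E] [NormedSpace 𝕜 E]

theorem iteratedDeriv_iteratedDeriv (k m : ℕ) (f : 𝕜 → E) :
    iteratedDeriv k (iteratedDeriv m f) = iteratedDeriv (k + m) f := by
  simp only [iteratedDeriv_eq_iterate, Function.iterate_add_apply]

theorem ContDiff.iteratedDeriv_of_add {n m : ℕ} {f : 𝕜 → E} (hf : ContDiff 𝕜 (n + m : ℕ) f) :
    ContDiff 𝕜 n (iteratedDeriv m f) := by
  rw [iteratedDeriv_eq_iterate]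
  exact hf.iterate_deriv' n m

end

section

variable {E : Type*} [NormedAddCommGroup E] [NormedSpace ℝ E]

theorem Asymptotics.IsBigO.inv_smul_of_pow_succ {α : Type*} {l : Filter α} {u : α → ℝ}
    {f : α → E} {k : ℕ} (hf : f =O[l] fun a => u a ^ (k + 1)) :
    (fun a => (u a)⁻¹ • f a) =O[l] fun a => u a ^ k := by
  refine ((isBigO_refl (fun a => (u a)⁻¹) l).smul hf).trans (isBigO_of_le _ fun a => ?_)
  rcases eq_or_ne (u a) 0 with h | h
  · simp [h]
  · simp [pow_succ', h]

theorem taylor_isBigO_nhds_zero {f : ℝ → E} {n : ℕ} (hf : ContDiff ℝ n f) (x : ℝ) :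
    (fun t : ℝ => f (x + t) - ∑ k ∈ Finset.range n, (t ^ k / k.factorial) • iteratedDeriv k f x)
      =O[𝓝 0] fun t => t ^ n := by
  have hshift : Tendsto (fun t : ℝ => x + t) (𝓝 0) (𝓝 x) := by
    simpa using (tendsto_const_nhds (x := x)).add (tendsto_id (x := 𝓝 (0:ℝ)))
  have hlo : (fun t => f (x + t) - taylorWithinEval f n Set.univ x (x + t)) =O[𝓝 0]
      fun t => t ^ n := by
    simpa [Function.comp_def] using
      ((taylor_isLittleO_univ (x₀ := x) hf).comp_tendsto hshift).isBigO
  have hlast : (fun t : ℝ => (t ^ n / n.factorial) • iteratedDeriv n f x) =O[𝓝 0] fun t => t ^ n :=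
    isBigO_of_le' (c := ‖iteratedDeriv n f x‖ / n.factorial) _ fun t =>
      le_of_eq (by rw [norm_smul, norm_div, Real.norm_natCast]; ring)
  refine (hlo.add hlast).congr_left fun t => ?_
  simp only [taylor_within_apply, Finset.sum_range_succ, iteratedDerivWithin_univ,
    add_sub_cancel_left, div_eq_inv_mul]
  abel

theorem taylor_isBigO_comp {f : ℝ → E} {n : ℕ} (hf : ContDiff ℝ n f) (x : ℝ) {u : ℝ → ℝ}
    (hu : u =O[𝓝 0] id) :
    (fun h : ℝ => f (x + u h) -
        ∑ k ∈ Finset.range n, (u h ^ k / k.factorial) • iteratedDeriv k f x)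
      =O[𝓝 0] fun h => h ^ n :=
  ((taylor_isBigO_nhds_zero hf x).comp_tendsto (hu.trans_tendsto tendsto_id)).trans (hu.pow n)

theorem centralDifference_sub_taylor_isBigO {f : ℝ → E} {n : ℕ} (hf : ContDiff ℝ n f) (x : ℝ) :
    (fun h : ℝ => f (x + h / 2) - f (x - h / 2) - ∑ k ∈ Finset.range n,
        (((h / 2) ^ k - (-(h / 2)) ^ k) / k.factorial) • iteratedDeriv k f x)
      =O[𝓝 0] fun h => h ^ n := by
  have hhalf : (fun h : ℝ => h / 2) =O[𝓝 0] id :=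
    (isBigO_const_mul_self (1 / 2 : ℝ) id _).congr_left fun h => one_div_mul_eq_div 2 h
  refine ((taylor_isBigO_comp hf x hhalf).sub (taylor_isBigO_comp hf x hhalf.neg_left)).congr_left
    fun h => ?_
  simp only [← sub_eq_add_neg, sub_div, sub_smul, Finset.sum_sub_distrib]
  abel

theorem centralDifference_iteratedDeriv_sub_taylor_isBigO {f : ℝ → E} {n m : ℕ}
    (hf : ContDiff ℝ (n + m : ℕ) f) (x : ℝ) :
    (fun h : ℝ => iteratedDeriv m f (x + h / 2) - iteratedDeriv m f (x - h / 2) -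
        ∑ k ∈ Finset.range n,
          (((h / 2) ^ k - (-(h / 2)) ^ k) / k.factorial) • iteratedDeriv (k + m) f x)
      =O[𝓝 0] fun h => h ^ n := by
  simpa only [iteratedDeriv_iteratedDeriv] using
    centralDifference_sub_taylor_isBigO hf.iteratedDeriv_of_add x

theorem Asymptotics.IsBigO.const_mul_pow_smul {α : Type*} {l : Filter α} {u : α → ℝ} {f : α → E}
    {k : ℕ} (hf : f =O[l] fun a => u a ^ k) (c : ℝ) (j : ℕ) :
    (fun a => (c * u a ^ j) • f a) =O[l] fun a => u a ^ (j + k) :=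
  (((isBigO_refl (fun a => u a ^ j) l).const_mul_left c).smul hf).congr_right fun a => by
    simp [pow_add]

theorem stabilizedCentralDifference_isBigO {U : ℝ → E} (hU : ContDiff ℝ 7 U) (x : ℝ) :
    (fun h : ℝ => U (x + h / 2) - U (x - h / 2)
        - (h ^ 2 / 24) • (iteratedDeriv 2 U (x + h / 2) - iteratedDeriv 2 U (x - h / 2))
        + (7 * h ^ 4 / 5760) • (iteratedDeriv 4 U (x + h / 2) - iteratedDeriv 4 U (x - h / 2))
        - h • deriv U x) =O[𝓝 0] fun h => h ^ 7 := by
  have hA := centralDifference_iteratedDeriv_sub_taylor_isBigO (n := 7) (m := 0) hU x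
  have hB := centralDifference_iteratedDeriv_sub_taylor_isBigO (n := 5) (m := 2) hU x
  have hD := centralDifference_iteratedDeriv_sub_taylor_isBigO (n := 3) (m := 4) hU x
  refine ((hA.sub (hB.const_mul_pow_smul (1 / 24) 2)).add
    (hD.const_mul_pow_smul (7 / 5760) 4)).congr_left fun h => ?_
  norm_num [Finset.sum_range_succ, Nat.factorial, iteratedDeriv_one]
  module

/-- The corrected half-grid difference of eqn. (15), with `h = Δx`. -/
noncomputable def stabilizedDifferenceQuotient (U : ℝ → E) (x h : ℝ) : E :=
  (1 / h) • (U (x + h / 2) - U (x - h / 2))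
    - ((h ^ 2 / 24) • ((1 / h) • (iteratedDeriv 2 U (x + h / 2) - iteratedDeriv 2 U (x - h / 2)))
      - (7 * h ^ 4 / 5760) • ((1 / h) • (iteratedDeriv 4 U (x + h / 2)
          - iteratedDeriv 4 U (x - h / 2))))

theorem stabilizedDifferenceQuotient_sub_deriv_isBigO {U : ℝ → E} (hU : ContDiff ℝ 7 U)
    (x : ℝ) :
    (fun h => stabilizedDifferenceQuotient U x h - deriv U x) =O[𝓝[≠] 0] fun h => h ^ 6 := by
  refine ((stabilizedCentralDifference_isBigO hU x).mono nhdsWithin_le_nhds).inv_smul_of_pow_succ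
    |>.congr' ?_ EventuallyEq.rfl
  filter_upwards [self_mem_nhdsWithin] with h (hh : h ≠ 0)
  simp only [stabilizedDifferenceQuotient]
  match_scalars <;> field_simp

end

/-- For smooth `U : ℝ → ℝⁿ`, the centered half-grid difference corrected by
`−(Δx²/24)` times the boundary second-derivative difference and `+(7Δx⁴/5760)` times the
boundary fourth-derivative difference equals `U'(x_i) + O(Δx⁶)`; hence applying the fixed
matrix `C` gives a fifth-order accurate approximation of `C(U_i) ∂_x U (x_i)`. -/
theorem stmt15 (n : ℕ) (U : ℝ → (Fin n → ℝ)) (hU : ContDiff ℝ 7 U)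
    (Cmat : Matrix (Fin n) (Fin n) ℝ) (x : ℝ) :
    ((fun h : ℝ =>
        (1 / h) • (U (x + h / 2) - U (x - h / 2))
          - ((h ^ 2 / 24) • ((1 / h) • (iteratedDeriv 2 U (x + h / 2)
                - iteratedDeriv 2 U (x - h / 2)))
            - (7 * h ^ 4 / 5760) • ((1 / h) • (iteratedDeriv 4 U (x + h / 2)
                - iteratedDeriv 4 U (x - h / 2))))
          - deriv U x)
      =O[𝓝[>] (0 : ℝ)] (fun h : ℝ => h ^ 6)) ∧
    ((fun h : ℝ =>
        Cmat.mulVec ((1 / h) • (U (x + h / 2) - U (x - h / 2))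
          - ((h ^ 2 / 24) • ((1 / h) • (iteratedDeriv 2 U (x + h / 2)
                - iteratedDeriv 2 U (x - h / 2)))
            - (7 * h ^ 4 / 5760) • ((1 / h) • (iteratedDeriv 4 U (x + h / 2)
                - iteratedDeriv 4 U (x - h / 2)))))
          - Cmat.mulVec (deriv U x))
      =O[𝓝[>] (0 : ℝ)] (fun h : ℝ => h ^ 6)) := by
  have hdiff : (fun h => stabilizedDifferenceQuotient U x h - deriv U x) =O[𝓝[>] 0]
      fun h => h ^ 6 :=
    (stabilizedDifferenceQuotient_sub_deriv_isBigO hU x).mono (nhdsGT_le_nhdsNE 0)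
  refine ⟨hdiff, ?_⟩
  refine ((Cmat.mulVecLin.toContinuousLinearMap.isBigO_comp _ _).trans hdiff).congr_left fun h => ?_
  simp [stabilizedDifferenceQuotient, Matrix.mulVec_sub]
end
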